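/- Let {D_I}_{I∈({1,...,n} choose 2)} be a family of positive real numbers and let x,y ∈ {1,...,n} be such that D_{x,y} = max_{i,j} D_{i,j}. Then the family is snakelike if and only if D_{i,j} = |D_{i,x} − D_{j,x}| for all distinct i,j ∈ {1,...,n}∖{x}. -/

import Mathlib

open SimpleGraph

variable {V : Type*}

/-- weight of a walk: sum of the weights of its edges -/
noncomputable def walkWeight (G : SimpleGraph V) (w : Sym2 V → ℝ) {i j : V} (p : G.Walk i j) : ℝ :=
  (p.edges.map w).sum

/-- the 2-weight: min over paths joining i and j -/
noncomputable def wdist (G : SimpleGraph V) (w : Sym2 V → ℝ) (i j : V) : ℝ :=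
  sInf {x : ℝ | ∃ p : G.Walk i j, p.IsPath ∧ walkWeight G w p = x}

def Realizes (G : SimpleGraph V) (w : Sym2 V → ℝ) {i j : V} (p : G.Walk i j) : Prop :=
  p.IsPath ∧ walkWeight G w p = wdist G w i j

def UsefulEdge (G : SimpleGraph V) (w : Sym2 V → ℝ) (e : Sym2 V) : Prop :=
  ∃ a b : V, a ≠ b ∧ ∀ p : G.Walk a b, Realizes G w p → e ∈ p.edges

def Pruned (G : SimpleGraph V) (w : Sym2 V → ℝ) : Prop :=
  ∀ e ∈ G.edgeSet, UsefulEdge G w e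

def PosWeights (G : SimpleGraph V) (w : Sym2 V → ℝ) : Prop :=
  ∀ e ∈ G.edgeSet, 0 < w e

def Indec (G : SimpleGraph V) (w : Sym2 V → ℝ) (i j : V) : Prop :=
  ∀ z : V, z ≠ i → z ≠ j → wdist G w i j < wdist G w i z + wdist G w z j

def IsLeaf (G : SimpleGraph V) (v : V) : Prop := (G.neighborSet v).ncard = 1

def IsSnake (G : SimpleGraph V) : Prop :=
  G.IsTree ∧ {v : V | IsLeaf G v}.ncard = 2

def IsCaterpillar (G : SimpleGraph V) : Prop :=
  G.IsTree ∧ ∃ (x₁ x₂ : V) (p : G.Walk x₁ x₂), p.IsPath ∧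
    {v : V | v ∈ p.support} = {v : V | 2 ≤ (G.neighborSet v).ncard}

def IsPolygon {n : ℕ} [NeZero n] (G : SimpleGraph (Fin n)) : Prop :=
  ∃ σ : Equiv.Perm (Fin n), G.edgeSet = Set.range (fun i : Fin n => s(σ i, σ (i + 1)))

noncomputable def tmin (G : SimpleGraph V) (w : Sym2 V → ℝ) (x : V) : ℝ :=
  (1 / 2) * sInf {r : ℝ | ∃ y z : V, y ≠ x ∧ z ≠ x ∧ y ≠ z ∧
    r = wdist G w x y + wdist G w x z - wdist G w y z}

def IsBipartiteOn (G : SimpleGraph V) (X Y : Set V) : Prop :=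
  X ∩ Y = ∅ ∧ X ∪ Y = Set.univ ∧ ∀ a b : V, G.Adj a b → (a ∈ X ∧ b ∈ Y) ∨ (a ∈ Y ∧ b ∈ X)

noncomputable def chainSum {α : Type*} (D : α → α → ℝ) : List α → ℝ
  | [] => 0
  | [_] => 0
  | a :: b :: l => D a b + chainSum D (b :: l)

def FIndec {n : ℕ} (D : Fin n → Fin n → ℝ) (i j : Fin n) : Prop :=
  ∀ z : Fin n, z ≠ i → z ≠ j → D i j < D i z + D z j

def TriangleIneq {n : ℕ} (D : Fin n → Fin n → ℝ) : Prop :=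
  ∀ i j k : Fin n, i ≠ j → j ≠ k → i ≠ k → D i j ≤ D i k + D k j

def MaxTwice (x y z : ℝ) : Prop :=
  (x = y ∧ z ≤ x) ∨ (x = z ∧ y ≤ x) ∨ (y = z ∧ x ≤ y)

def FourPoint {n : ℕ} (D : Fin n → Fin n → ℝ) : Prop :=
  ∀ i j k h : Fin n, i ≠ j → i ≠ k → i ≠ h → j ≠ k → j ≠ h → k ≠ h →
    MaxTwice (D i j + D k h) (D i k + D j h) (D i h + D k j)

def MedianFamily {n : ℕ} (D : Fin n → Fin n → ℝ) : Prop :=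
  ∀ a b c : Fin n, ∃! m : Fin n,
    ∀ i ∈ ({a, b, c} : Set (Fin n)), ∀ j ∈ ({a, b, c} : Set (Fin n)), i ≠ j →
      D i j = D i m + D j m

noncomputable def tminF {n : ℕ} (D : Fin n → Fin n → ℝ) (x : Fin n) : ℝ :=
  (1 / 2) * sInf {r : ℝ | ∃ y z : Fin n, y ≠ x ∧ z ≠ x ∧ y ≠ z ∧ r = D x y + D x z - D y z}

def interiorSet {G : SimpleGraph V} {u v : V} (p : G.Walk u v) : Set V :=
  {x : V | x ∈ p.support ∧ x ≠ u ∧ x ≠ v}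

/-!
The 2-weights of a positive-weighted snake form a line metric: since the snake is a path through
all vertices, `D i j = |g i - g j|` with `g` the 2-weight from one end. Conversely, every injective
coordinate `g` is realised by the path through the vertices in increasing order of `g`, weighted
by `|g u - g v|`. For a line metric the ends of a diameter are extreme points of the line, so the
distances from such an end `x` are themselves coordinates, which is the identity
`D i j = |D i x - D j x|`; conversely, that identity says that `D · x`, set to `0` at `x`, is a
line coordinate.
-/

section WalkWeight

variable {G : SimpleGraph V} {w : Sym2 V → ℝ}

lemma walkWeight_cons {u v x : V} (h : G.Adj u v) (p : G.Walk v x) :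
    walkWeight G w (Walk.cons h p) = w s(u, v) + walkWeight G w p := by
  simp [walkWeight]

lemma walkWeight_append {u v x : V} (p : G.Walk u v) (q : G.Walk v x) :
    walkWeight G w (p.append q) = walkWeight G w p + walkWeight G w q := by
  simp [walkWeight, Walk.edges_append]

lemma walkWeight_reverse {u v : V} (p : G.Walk u v) :
    walkWeight G w p.reverse = walkWeight G w p := by
  simp [walkWeight, Walk.edges_reverse, List.map_reverse, List.sum_reverse]

lemma walkWeight_concat {u v x : V} (p : G.Walk u v) (h : G.Adj v x) :
    walkWeight G w (p.concat h) = walkWeight G w p + w s(v, x) := by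
  simp [walkWeight, Walk.edges_concat]

lemma walkWeight_map {W : Type*} {G' : SimpleGraph W} (e : G →g G') (w : Sym2 W → ℝ)
    {u v : V} (p : G.Walk u v) : walkWeight G' w (p.map e) = walkWeight G (w ∘ Sym2.map e) p := by
  simp [walkWeight, Walk.edges_map, List.map_map]

lemma walkWeight_nonneg (hw : ∀ e ∈ G.edgeSet, 0 ≤ w e) {u v : V} (p : G.Walk u v) :
    0 ≤ walkWeight G w p :=
  List.sum_nonneg <| by
    simpa using fun e he => hw e (p.edges_subset_edgeSet he)

lemma walkWeight_bypass_le [DecidableEq V] (hw : ∀ e ∈ G.edgeSet, 0 ≤ w e) {u v : V}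
    (p : G.Walk u v) : walkWeight G w p.bypass ≤ walkWeight G w p := by
  obtain ⟨l, hperm, hsub⟩ :=
    p.bypass_isPath.isTrail.edges_nodup.subperm p.edges_bypass_subset_edges
  rw [walkWeight, walkWeight, ← (hperm.map w).sum_eq]
  exact (hsub.map w).sum_le_sum <| by
    simpa using fun e he => hw e (p.edges_subset_edgeSet he)

lemma abs_sub_le_walkWeight (f : V → ℝ) (hw : ∀ u v, G.Adj u v → w s(u, v) = |f u - f v|)
    {u v : V} (p : G.Walk u v) : |f u - f v| ≤ walkWeight G w p := by
  induction p with
  | nil => simp [walkWeight]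
  | @cons a b c h q ih =>
    rw [walkWeight_cons, hw a b h]
    linarith [abs_sub_le (f a) (f b) (f c)]

end WalkWeight

section Wdist

variable {G : SimpleGraph V} {w : Sym2 V → ℝ}

lemma wdist_comm (i j : V) : wdist G w i j = wdist G w j i := by
  unfold wdist
  congr 1
  ext r
  exact ⟨fun ⟨p, hp, hr⟩ => ⟨p.reverse, hp.reverse, (walkWeight_reverse p).trans hr⟩,
    fun ⟨p, hp, hr⟩ => ⟨p.reverse, hp.reverse, (walkWeight_reverse p).trans hr⟩⟩

lemma wdist_nonneg (hw : ∀ e ∈ G.edgeSet, 0 ≤ w e) (i j : V) : 0 ≤ wdist G w i j :=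
  Real.sInf_nonneg <| by
    rintro r ⟨p, -, rfl⟩
    exact walkWeight_nonneg hw p

lemma wdist_le_walkWeight (hw : ∀ e ∈ G.edgeSet, 0 ≤ w e) {i j : V} (p : G.Walk i j) :
    wdist G w i j ≤ walkWeight G w p := by
  classical
  have hbdd : BddBelow {x : ℝ | ∃ q : G.Walk i j, q.IsPath ∧ walkWeight G w q = x} := by
    refine ⟨0, ?_⟩
    rintro r ⟨q, -, rfl⟩
    exact walkWeight_nonneg hw q
  exact (csInf_le hbdd ⟨p.bypass, p.bypass_isPath, rfl⟩).trans (walkWeight_bypass_le hw p)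

lemma le_wdist {i j : V} {L : ℝ} (hG : G.Reachable i j)
    (hL : ∀ p : G.Walk i j, p.IsPath → L ≤ walkWeight G w p) : L ≤ wdist G w i j := by
  classical
  obtain ⟨p⟩ := hG
  exact le_csInf ⟨_, p.bypass, p.bypass_isPath, rfl⟩ fun r ⟨q, hq, hr⟩ => hr ▸ hL q hq

lemma SimpleGraph.IsAcyclic.wdist_eq_walkWeight (hG : G.IsAcyclic) {i j : V} {p : G.Walk i j}
    (hp : p.IsPath) : wdist G w i j = walkWeight G w p := by
  have : {x : ℝ | ∃ q : G.Walk i j, q.IsPath ∧ walkWeight G w q = x} =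
      {walkWeight G w p} := by
    ext r
    refine ⟨fun ⟨q, hq, hr⟩ => ?_, fun hr => ⟨p, hp, hr.symm⟩⟩
    have : q = p := congrArg Subtype.val ((hG.subsingleton_path i j).elim ⟨q, hq⟩ ⟨p, hp⟩)
    simp [← hr, this]
  rw [wdist, this, csInf_singleton]

lemma SimpleGraph.IsAcyclic.wdist_add_of_mem_support [DecidableEq V] (hG : G.IsAcyclic)
    {a b v : V} {p : G.Walk a b} (hp : p.IsPath) (hv : v ∈ p.support) :
    wdist G w a b = wdist G w a v + wdist G w v b := by
  rw [hG.wdist_eq_walkWeight hp, hG.wdist_eq_walkWeight (hp.takeUntil hv),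
    hG.wdist_eq_walkWeight (hp.dropUntil hv), ← walkWeight_append, p.take_spec hv]

lemma SimpleGraph.IsAcyclic.wdist_eq_abs_sub_of_mem_support (hG : G.IsAcyclic)
    (hw : ∀ e ∈ G.edgeSet, 0 ≤ w e) {a b i j : V} {p : G.Walk a b} (hp : p.IsPath)
    (hi : i ∈ p.support) (hj : j ∈ p.support) :
    wdist G w i j = |wdist G w a i - wdist G w a j| := by
  classical
  have hsplit : i ∈ (p.takeUntil j hj).support ∨ i ∈ (p.dropUntil j hj).support := by
    rw [← Walk.mem_support_append_iff, p.take_spec hj]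
    exact hi
  rcases hsplit with h | h
  · have := hG.wdist_add_of_mem_support (w := w) (hp.takeUntil hj) h
    rw [abs_sub_comm, abs_of_nonneg (by linarith [wdist_nonneg hw i j])]
    linarith
  · have hji := wdist_nonneg hw j i
    rw [wdist_comm i j]
    have hjb := hG.wdist_add_of_mem_support (w := w) (hp.dropUntil hj) h
    have hab := hG.wdist_add_of_mem_support (w := w) hp hj
    have hab' := hG.wdist_add_of_mem_support (w := w) hp hi
    rw [abs_of_nonneg (by linarith)]
    linarith

lemma wdist_eq_abs_sub_of_walkWeight_eq (f : V → ℝ)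
    (hw : ∀ u v, G.Adj u v → w s(u, v) = |f u - f v|) {i j : V} (p : G.Walk i j)
    (hp : walkWeight G w p = |f i - f j|) : wdist G w i j = |f i - f j| := by
  have hw₀ : ∀ e ∈ G.edgeSet, 0 ≤ w e := by
    rintro ⟨u, v⟩ huv
    exact (hw u v huv).symm ▸ abs_nonneg _
  exact le_antisymm (hp ▸ wdist_le_walkWeight hw₀ p)
    (le_wdist ⟨p⟩ fun q _ => abs_sub_le_walkWeight f hw q)

end Wdist

section Snake

variable {G : SimpleGraph V}

lemma SimpleGraph.IsAcyclic.isLeaf_of_forall_adj_mem_support (hG : G.IsAcyclic) {a u : V}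
    {p : G.Walk a u} (hp : p.IsPath) (hau : a ≠ u) (h : ∀ t, G.Adj u t → t ∈ p.support) :
    IsLeaf G u := by
  have : G.neighborSet u = {p.penultimate} := by
    ext t
    refine ⟨fun ht => hG.eq_penultimate_of_adj_end hp ht (h t ht), ?_⟩
    rintro rfl
    exact (p.adj_penultimate (Walk.not_nil_of_ne hau)).symm
  rw [IsLeaf, this, Set.ncard_singleton]

lemma IsSnake.exists_isPath_forall_mem_support [Finite V] (hG : IsSnake G) :
    ∃ (a b : V) (p : G.Walk a b), p.IsPath ∧ ∀ v, v ∈ p.support := by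
  classical
  have := Fintype.ofFinite V
  obtain ⟨hT, hL⟩ := hG
  obtain ⟨a, b, -, hleaves⟩ := Set.ncard_eq_two.mp hL
  obtain ⟨p, hp, hp_unique⟩ := hT.existsUnique_path a b
  refine ⟨a, b, p, hp, fun v => ?_⟩
  -- the end of a longest path from `a` through `v` is a leaf other than `a`, hence `b`
  let lengths : Set ℕ :=
    {k | ∃ (u : V) (q : G.Walk a u), q.IsPath ∧ v ∈ q.support ∧ q.length = k}
  have hfin : lengths.Finite := (Set.finite_lt_nat (Fintype.card V)).subset <| by
    rintro _ ⟨u, q, hq, -, rfl⟩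
    exact hq.length_lt
  obtain ⟨q₀⟩ := hT.connected.preconnected a v
  obtain ⟨_, ⟨u, q, hq, hv, rfl⟩, hmax⟩ :=
    hfin.exists_maximal
      ⟨_, v, q₀.bypass, q₀.bypass_isPath, q₀.bypass.end_mem_support, rfl⟩
  by_cases hau : a = u
  · subst hau
    simp [Walk.isPath_iff_nil.mp hq |>.eq_nil] at hv
    exact hv ▸ p.start_mem_support
  have hleaf : IsLeaf G u := by
    refine hT.isAcyclic.isLeaf_of_forall_adj_mem_support hq hau fun t hut => ?_
    by_contra ht
    have := hmax ⟨t, q.concat hut, hq.concat ht hut,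
      q.support_subset_support_concat hut hv, rfl⟩
    simp [Walk.length_concat] at this
  have hub : u = b := by
    have : u ∈ ({a, b} : Set V) := hleaves ▸ hleaf
    simpa [Ne.symm hau] using this
  subst hub
  exact hp_unique q hq ▸ hv

lemma SimpleGraph.Iso.isLeaf_iff {W : Type*} {G' : SimpleGraph W} (e : G ≃g G') (v : V) :
    IsLeaf G' (e v) ↔ IsLeaf G v := by
  rw [IsLeaf, IsLeaf, ← e.image_neighborSet, Set.ncard_image_of_injective _ e.injective]

lemma SimpleGraph.Iso.isSnake_iff {W : Type*} {G' : SimpleGraph W} (e : G ≃g G') :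
    IsSnake G ↔ IsSnake G' := by
  have : {v | IsLeaf G' v} = e '' {v | IsLeaf G v} := by
    ext v'
    obtain ⟨v, rfl⟩ := e.surjective v'
    simp [e.isLeaf_iff, e.injective.mem_set_image]
  rw [IsSnake, IsSnake, e.isTree_iff, this, Set.ncard_image_of_injective _ e.injective]

end Snake

section PathGraph

variable {n : ℕ}

lemma pathGraph_mem_edges_of_le_of_lt {a b u v : Fin n} (hab : a.val + 1 = b.val)
    (p : (pathGraph n).Walk u v) (hu : u.val ≤ a.val) (hv : a.val < v.val) :
    s(a, b) ∈ p.edges := by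
  induction p with
  | nil => omega
  | @cons c d e h q ih =>
    rw [Walk.edges_cons, List.mem_cons]
    by_cases hd : d.val ≤ a.val
    · exact Or.inr (ih hd hv)
    · rw [pathGraph_adj] at h
      refine Or.inl ?_
      rw [show c = a from Fin.ext (by omega), show d = b from Fin.ext (by omega)]

lemma pathGraph_isAcyclic : (pathGraph n).IsAcyclic := by
  refine isAcyclic_iff_forall_adj_isBridge.mpr fun u v huv => ?_
  rw [isBridge_iff_forall_walk_mem_edges]
  intro p
  rcases pathGraph_adj.mp huv with h | h
  · exact pathGraph_mem_edges_of_le_of_lt h p le_rfl (by omega)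
  · have := pathGraph_mem_edges_of_le_of_lt h p.reverse le_rfl (by omega)
    rwa [Walk.edges_reverse, List.mem_reverse, Sym2.eq_swap] at this

lemma pathGraph_isLeaf_iff (hn : 2 ≤ n) (v : Fin n) :
    IsLeaf (pathGraph n) v ↔ v.val = 0 ∨ v.val = n - 1 := by
  constructor
  · intro h
    by_contra! hv
    have hsub : {⟨v - 1, by omega⟩, ⟨v + 1, by omega⟩} ⊆ (pathGraph n).neighborSet v := by
      intro u hu
      rcases hu with rfl | rfl
      · simp [pathGraph_adj]
        omega
      · simp [pathGraph_adj]
    have := Set.ncard_le_ncard hsub (Set.toFinite _)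
    rw [Set.ncard_pair (Fin.ne_of_val_ne (by simp))] at this
    rw [IsLeaf] at h
    omega
  · intro hv
    have : ∃ u, (pathGraph n).neighborSet v = {u} := by
      rcases hv with hv | hv
      · exact ⟨⟨1, hn⟩, by ext u; simp [pathGraph_adj, Fin.ext_iff]; omega⟩
      · exact ⟨⟨n - 2, by omega⟩, by ext u; simp [pathGraph_adj, Fin.ext_iff]; omega⟩
    obtain ⟨u, hu⟩ := this
    rw [IsLeaf, hu, Set.ncard_singleton]

lemma isSnake_pathGraph (hn : 2 ≤ n) : IsSnake (pathGraph n) := by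
  obtain ⟨m, rfl⟩ : ∃ m, n = m + 1 := ⟨n - 1, by omega⟩
  have : {v | IsLeaf (pathGraph (m + 1)) v} = {0, Fin.last m} := by
    ext v
    rw [Set.mem_ofPred_eq, pathGraph_isLeaf_iff hn]
    simp only [Set.mem_insert_iff, Set.mem_singleton_iff, Fin.ext_iff, Fin.val_zero,
      Fin.val_last]
    omega
  refine ⟨⟨pathGraph_connected m, pathGraph_isAcyclic⟩, ?_⟩
  rw [this, Set.ncard_pair (by simp [Fin.ext_iff]; omega)]

lemma pathGraph_exists_walkWeight_eq {g : Fin n → ℝ} (hg : Monotone g)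
    {w : Sym2 (Fin n) → ℝ} (hw : ∀ u v, (pathGraph n).Adj u v → w s(u, v) = |g u - g v|)
    (a b : Fin n) :
    ∃ p : (pathGraph n).Walk a b, walkWeight _ w p = |g a - g b| := by
  wlog hab : a ≤ b generalizing a b
  · obtain ⟨p, hp⟩ := this b a (le_of_not_ge hab)
    exact ⟨p.reverse, by rw [walkWeight_reverse, hp, abs_sub_comm]⟩
  rw [abs_sub_comm, abs_of_nonneg (sub_nonneg.mpr (hg hab))]
  suffices ∀ m, a.val ≤ m → ∀ hm : m < n,
      ∃ p : (pathGraph n).Walk a ⟨m, hm⟩, walkWeight _ w p = g ⟨m, hm⟩ - g a from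
    this b.val hab b.isLt
  intro m ham
  induction m, ham using Nat.le_induction with
  | base => exact fun _ => ⟨Walk.nil, by simp [walkWeight]⟩
  | succ m ham ih =>
    intro hm
    obtain ⟨p, hp⟩ := ih (by omega)
    have hadj : (pathGraph n).Adj ⟨m, by omega⟩ ⟨m + 1, hm⟩ :=
      pathGraph_adj.mpr (Or.inl rfl)
    have hle : g ⟨m, by omega⟩ ≤ g ⟨m + 1, hm⟩ := hg (Fin.mk_le_mk.mpr (by omega))
    refine ⟨p.concat hadj, ?_⟩
    rw [walkWeight_concat, hp, hw _ _ hadj, abs_sub_comm, abs_of_nonneg (by linarith)]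
    ring

end PathGraph

theorem exists_isSnake_wdist_eq_abs_sub {n : ℕ} (hn : 2 ≤ n) (f : Fin n → ℝ)
    (hf : Function.Injective f) :
    ∃ (S : SimpleGraph (Fin n)) (w : Sym2 (Fin n) → ℝ), IsSnake S ∧ PosWeights S w ∧
      ∀ i j, wdist S w i j = |f i - f j| := by
  set σ := Tuple.sort f
  let e := Iso.map σ (pathGraph n)
  let w : Sym2 (Fin n) → ℝ :=
    Sym2.lift ⟨fun a b => |f a - f b|, fun a b => abs_sub_comm _ _⟩
  refine ⟨_, w, e.isSnake_iff.mp (isSnake_pathGraph hn), ?_, fun i j => ?_⟩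
  · refine Sym2.ind fun u v huv => ?_
    exact abs_pos.mpr (sub_ne_zero.mpr (hf.ne ((SimpleGraph.mem_edgeSet _).mp huv).ne))
  obtain ⟨p, hp⟩ := pathGraph_exists_walkWeight_eq (w := w ∘ Sym2.map σ)
    (Tuple.monotone_sort f) (fun _ _ _ => rfl) (σ.symm i) (σ.symm j)
  have := wdist_eq_abs_sub_of_walkWeight_eq f (fun _ _ _ => rfl) (p.map e.toHom)
    (by rw [walkWeight_map]; exact hp)
  simpa [e] using this

section LineCoordinate

variable {ι : Type*} {D : ι → ι → ℝ} {g : ι → ℝ}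

def IsLineCoordinate (D : ι → ι → ℝ) (g : ι → ℝ) : Prop :=
  ∀ i j, i ≠ j → D i j = |g i - g j|

lemma IsLineCoordinate.injective (hg : IsLineCoordinate D g)
    (hpos : ∀ i j, i ≠ j → 0 < D i j) : Function.Injective g := by
  intro i j hij
  by_contra hne
  have := hg i j hne
  rw [hij, sub_self, abs_zero] at this
  exact (hpos i j hne).ne' this

/-- The ends of a diameter are extreme points of the line, so distances from an end are
differences of coordinates. -/
lemma IsLineCoordinate.eq_abs_sub_of_forall_le (hg : IsLineCoordinate D g) {x y : ι}
    (hxy : x ≠ y) (hmax : ∀ i j, i ≠ j → D i j ≤ D x y) :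
    ∀ i j, i ≠ x → j ≠ x → i ≠ j → D i j = |D i x - D j x| := by
  have hext : (∀ k, g x ≤ g k) ∨ (∀ k, g k ≤ g x) := by
    by_contra! h
    obtain ⟨⟨k, hk⟩, ⟨l, hl⟩⟩ := h
    rcases le_total (g x) (g y) with hy | hy
    · have := hmax k y (by rintro rfl; linarith)
      rw [hg k y (by rintro rfl; linarith), hg x y hxy,
        abs_of_nonpos (a := g x - g y) (by linarith)] at this
      linarith [neg_le_abs (g k - g y)]
    · have := hmax l y (by rintro rfl; linarith)
      rw [hg l y (by rintro rfl; linarith), hg x y hxy,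
        abs_of_nonneg (a := g x - g y) (by linarith)] at this
      linarith [le_abs_self (g l - g y)]
  intro i j hix hjx hij
  rw [hg i j hij, hg i x hix, hg j x hjx]
  rcases hext with h | h
  · rw [abs_of_nonneg (sub_nonneg.mpr (h i)), abs_of_nonneg (sub_nonneg.mpr (h j))]
    ring_nf
  · rw [abs_of_nonpos (sub_nonpos.mpr (h i)), abs_of_nonpos (sub_nonpos.mpr (h j)), abs_sub_comm]
    ring_nf

lemma isLineCoordinate_update_of_eq_abs_sub [DecidableEq ι] (hsym : ∀ i j, D i j = D j i)
    (hpos : ∀ i j, i ≠ j → 0 < D i j) {x : ι}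
    (h : ∀ i j, i ≠ x → j ≠ x → i ≠ j → D i j = |D i x - D j x|) :
    IsLineCoordinate D (Function.update (D · x) x 0) := by
  intro i j hij
  rcases eq_or_ne i x with rfl | hix
  · rw [Function.update_self, Function.update_of_ne hij.symm, zero_sub, abs_neg,
      abs_of_pos (hpos j i hij.symm), hsym]
  rcases eq_or_ne j x with rfl | hjx
  · rw [Function.update_self, Function.update_of_ne hix, sub_zero, abs_of_pos (hpos i j hij)]
  rw [Function.update_of_ne hix, Function.update_of_ne hjx]
  exact h i j hix hjx hij

end LineCoordinate

theorem stmt_2_general {n : ℕ} (D : Fin n → Fin n → ℝ)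
    (hsym : ∀ i j, D i j = D j i) (hpos : ∀ i j : Fin n, i ≠ j → 0 < D i j)
    (x y : Fin n) (hxy : x ≠ y) (hmax : ∀ i j : Fin n, i ≠ j → D i j ≤ D x y) :
    (∃ (S : SimpleGraph (Fin n)) (w : Sym2 (Fin n) → ℝ), IsSnake S ∧ PosWeights S w ∧
        ∀ i j : Fin n, i ≠ j → wdist S w i j = D i j) ↔
      (∀ i j : Fin n, i ≠ x → j ≠ x → i ≠ j → D i j = |D i x - D j x|) := by
  constructor
  · rintro ⟨S, w, hS, hw, hSD⟩
    obtain ⟨a, _, p, hp, hall⟩ := hS.exists_isPath_forall_mem_support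
    have hline : IsLineCoordinate D (wdist S w a) := fun i j hij =>
      (hSD i j hij).symm.trans <| hS.1.isAcyclic.wdist_eq_abs_sub_of_mem_support
        (fun e he => (hw e he).le) hp (hall i) (hall j)
    exact hline.eq_abs_sub_of_forall_le hxy hmax
  · intro h
    have hline := isLineCoordinate_update_of_eq_abs_sub hsym hpos h
    have hn : 2 ≤ n := Fin.nontrivial_iff_two_le.mp ⟨x, y, hxy⟩
    obtain ⟨S, w, hS, hw, hSD⟩ :=
      exists_isSnake_wdist_eq_abs_sub hn _ (hline.injective hpos)
    exact ⟨S, w, hS, hw, fun i j hij => (hSD i j).trans (hline i j hij).symm⟩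

/-- Characterization of snakelike families: if `D x y` is the maximum of the family, the
family is snakelike iff `D i j = |D i x - D j x|` for all distinct `i, j ≠ x`. -/
theorem stmt_2 {n : ℕ} (hn : 2 ≤ n) (D : Fin n → Fin n → ℝ)
    (hsym : ∀ i j, D i j = D j i) (hpos : ∀ i j : Fin n, i ≠ j → 0 < D i j)
    (x y : Fin n) (hxy : x ≠ y) (hmax : ∀ i j : Fin n, i ≠ j → D i j ≤ D x y) :
    (∃ (S : SimpleGraph (Fin n)) (w : Sym2 (Fin n) → ℝ), IsSnake S ∧ PosWeights S w ∧
        ∀ i j : Fin n, i ≠ j → wdist S w i j = D i j) ↔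
      (∀ i j : Fin n, i ≠ x → j ≠ x → i ≠ j → D i j = |D i x - D j x|) :=
  stmt_2_general D hsym hpos x y hxy hmax
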